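/- arXiv:1211.2243 — 2 statements merged into one kernel-verified Lean document; each statement's English description precedes it below -/
import Mathlib

section
/- Let H be a connected graph formed by gluing connected graphs G1 and G2 at a single vertex v (i.e., H1 ∪ H2 = H, H1 ≅ G1, H2 ≅ G2, H1 ∩ H2 = {v}). If H2' is any connected subgraph of H isomorphic to G2 containing v such that E(H1') ∪ E(H2') = E(H) for some subgraph H1' ≅ G1, then the intersection H2' ∩ H1 is a connected subgraph of H. -/
/-- Let `H` be formed by gluing connected graphs `G1, G2` at a single
vertex `v` (subgraphs `H1 ≅ G1`, `H2 ≅ G2` with `H1 ⊔ H2 = H`, `V(H1) ∩ V(H2) = {v}`).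
If `H2'` is a connected subgraph of `H` isomorphic to `G2`, containing `v`, such that
`E(H1') ∪ E(H2') = E(H)` for some subgraph `H1' ≅ G1`, then `H2' ∩ H1` is a connected
subgraph of `H`. -/
theorem glue_intersection_connected {V W₁ W₂ : Type*}
    (G1 : SimpleGraph W₁) (G2 : SimpleGraph W₂)
    (hG1 : G1.Connected) (hG2 : G2.Connected)
    (H : SimpleGraph V) (H1 H2 : H.Subgraph)
    (h1 : Nonempty (H1.coe ≃g G1)) (h2 : Nonempty (H2.coe ≃g G2))
    (hsup : H1 ⊔ H2 = ⊤) (v : V) (hv : H1.verts ∩ H2.verts = {v})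
    (H2' : H.Subgraph) (h2'c : H2'.coe.Connected) (h2' : Nonempty (H2'.coe ≃g G2))
    (hv2' : v ∈ H2'.verts)
    (hdecomp : ∃ H1' : H.Subgraph, Nonempty (H1'.coe ≃g G1) ∧
      H1'.edgeSet ∪ H2'.edgeSet = H.edgeSet) :
    (H2' ⊓ H1).coe.Connected := by
  classical
  have hvmem : v ∈ H1.verts ∩ H2.verts := hv.symm ▸ Set.mem_singleton v
  have hv1 : v ∈ H1.verts := hvmem.1
  have hvK : v ∈ (H2' ⊓ H1).verts := ⟨hv2', hv1⟩
  -- any edge of H2' is an edge of H1 or H2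
  have hsplit : ∀ {x y : V}, H2'.Adj x y → H1.Adj x y ∨ H2.Adj x y := by
    intro x y hxy
    have hH : H.Adj x y := H2'.adj_sub hxy
    have : (H1 ⊔ H2).Adj x y := by rw [hsup]; exact hH
    exact this
  have hvof : ∀ {x : V}, x ∈ H1.verts → x ∈ H2.verts → x = v := by
    intro x hx hx2
    have : x ∈ ({v} : Set V) := hv ▸ Set.mem_inter hx hx2
    exact this
  -- an edge of H2' with both endpoints in H1 lies in H1
  have hedge : ∀ {x y : V}, H2'.Adj x y → x ∈ H1.verts → y ∈ H1.verts → H1.Adj x y := by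
    intro x y hxy hx hy
    rcases hsplit hxy with h | h
    · exact h
    · exact absurd ((hvof hx h.fst_mem).trans (hvof hy h.snd_mem).symm) hxy.ne
  have key : ∀ (b a : H2'.verts) (w : H2'.coe.Walk a b) (hb : (b : V) ∈ H1.verts),
      (∀ ha : (a : V) ∈ H1.verts,
        (H2' ⊓ H1).coe.Reachable ⟨a, a.2, ha⟩ ⟨b, b.2, hb⟩) ∧
      ((a : V) ∉ H1.verts →
        (H2' ⊓ H1).coe.Reachable ⟨v, hvK⟩ ⟨b, b.2, hb⟩) := by
    intro b a w hb
    induction w with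
    | nil => exact ⟨fun ha => SimpleGraph.Reachable.refl _, fun ha => absurd hb ha⟩
    | @cons a c b h p ih =>
      have hadj : H2'.Adj ↑a ↑c := h
      constructor
      · intro ha
        by_cases hc : (c : V) ∈ H1.verts
        · have hadj1 : H1.Adj ↑a ↑c := hedge hadj ha hc
          have hK : (H2' ⊓ H1).coe.Adj ⟨a, a.2, ha⟩ ⟨c, c.2, hc⟩ := ⟨hadj, hadj1⟩
          exact hK.reachable.trans ((ih hb).1 hc)
        · have ha2 : (a : V) ∈ H2.verts := by
            rcases hsplit hadj with h1 | h2
            · exact absurd h1.snd_mem hc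
            · exact h2.fst_mem
          have heq : (⟨(a : V), a.2, ha⟩ : (H2' ⊓ H1).verts) = ⟨v, hvK⟩ :=
            Subtype.ext (hvof ha ha2)
          rw [heq]
          exact (ih hb).2 hc
      · intro ha
        by_cases hc : (c : V) ∈ H1.verts
        · have hc2 : (c : V) ∈ H2.verts := by
            rcases hsplit hadj with h1 | h2
            · exact absurd h1.fst_mem ha
            · exact h2.snd_mem
          have heq : (⟨(c : V), c.2, hc⟩ : (H2' ⊓ H1).verts) = ⟨v, hvK⟩ :=
            Subtype.ext (hvof hc hc2)
          rw [← heq]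
          exact (ih hb).1 hc
        · exact (ih hb).2 hc
  rw [SimpleGraph.connected_iff]
  refine ⟨?_, ⟨⟨v, hvK⟩⟩⟩
  rintro ⟨x, hx2', hx1⟩ ⟨y, hy2', hy1⟩
  obtain ⟨w⟩ := h2'c.preconnected ⟨x, hx2'⟩ ⟨y, hy2'⟩
  exact (key ⟨y, hy2'⟩ ⟨x, hx2'⟩ w hy1).1 hx1
end

section
/- Let q ≥ 2 and suppose X and Y are independent random variables, each uniformly distributed on Z/qZ. If q is even, then for the random variable Z = X·(Y − 3) − 2W₁ − 2W₂ − 4W₃ − 2W₄ where W₁,...,W₄ are additional independent uniform variables on Z/qZ (all mutually independent with X, Y), the distribution of Z satisfies P(Z ≡ 2i) = 3/(2q) and P(Z ≡ 2i+1) = 1/(2q) for each i ∈ {0, 1, ..., q/2 − 1}. -/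
/-! Solve for `W₄`: for even `q` the equation `2 * w = a` has two solutions when `a` is even and
none otherwise, so for each `X, Y` and each of the `q³` choices of `W₁, W₂, W₃` there are two values
of `W₄` giving `Z = c` if `X (Y - 1) ≡ c (mod 2)`, and none otherwise. Reduction mod 2 is a surjective
homomorphism, so each parity pair of `(X, Y)` is taken by `(q/2)²` pairs, and `x (y - 1) = 0` holds
for three of the four pairs in `ZMod 2`. -/

open Finset

namespace AddMonoidHom

variable {G H : Type*} [AddGroup G] [Fintype G] [AddMonoid H] [Fintype H] [DecidableEq H]
  {f : G →+ H}

theorem card_mul_card_fiber_of_surjective (hf : Function.Surjective f) (y : H) :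
    Fintype.card H * #{x | f x = y} = Fintype.card G := by
  have hfib (z : H) : #{x | f x = z} = #{x | f x = y} :=
    card_fiber_eq_of_mem_range f (hf z) (hf y)
  calc Fintype.card H * #{x | f x = y} = ∑ z : H, #{x | f x = z} := by simp [hfib]
    _ = Fintype.card G := (card_eq_sum_card_fiberwise (by simp)).symm

theorem card_smul_sum_comp_of_surjective {M : Type*} [AddCommMonoid M]
    (hf : Function.Surjective f) (g : H → M) :
    Fintype.card H • ∑ x, g (f x) = Fintype.card G • ∑ y, g y := by
  have hfib (y : H) : ∑ x with f x = y, g (f x) = #{x | f x = y} • g y :=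
    (sum_congr rfl fun x hx => by rw [(mem_filter.mp hx).2]).trans (sum_const _)
  rw [← sum_fiberwise univ f, ← card_mul_card_fiber_of_surjective hf 0, mul_smul]
  simp_rw [hfib, card_fiber_eq_of_mem_range f (hf _) (hf 0), smul_sum]

end AddMonoidHom

namespace ZMod

variable {q : ℕ} [NeZero q]

theorem card_filter_two_mul_eq (heven : 2 ∣ q) (a : ZMod q) :
    #{w : ZMod q | 2 * w = a} = if castHom heven (ZMod 2) a = 0 then 2 else 0 := by
  split_ifs with ha
  · obtain ⟨w₀, rfl⟩ : ∃ w₀, 2 * w₀ = a := by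
      rw [castHom_apply, cast_eq_val, natCast_eq_zero_iff] at ha
      obtain ⟨m, hm⟩ := ha
      exact ⟨m, by rw [← natCast_zmod_val a, hm, Nat.cast_mul, Nat.cast_ofNat]⟩
    have hfib := AddMonoidHom.card_fiber_eq_of_mem_range (nsmulAddMonoidHom 2 : ZMod q →+ ZMod q)
      ⟨w₀, rfl⟩ ⟨0, smul_zero 2⟩
    have hker := IsAddCyclic.card_nsmulAddMonoidHom_ker (ZMod q) 2
    rw [Nat.card_zmod, Nat.gcd_eq_right heven, Nat.card_eq_fintype_card, Fintype.card_subtype] at hker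
    simp only [nsmulAddMonoidHom_apply, nsmul_eq_mul, Nat.cast_ofNat] at hfib
    rw [hfib, ← hker]
    simp [nsmul_eq_mul]
  · refine card_eq_zero.mpr (filter_eq_empty_iff.mpr fun w _ hw => ha ?_)
    rw [← hw, map_mul, map_ofNat]
    exact zero_mul _

theorem four_mul_sum_sum_ite_castHom_mul_sub_one (heven : 2 ∣ q) (e : ZMod 2) :
    4 * ∑ x : ZMod q, ∑ y : ZMod q,
        (if castHom heven (ZMod 2) x * (castHom heven (ZMod 2) y - 1) = e then 1 else 0)
      = q ^ 2 * if e = 0 then 3 else 1 := by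
  have htable : (∑ p : ZMod 2 × ZMod 2, if p.1 * (p.2 - 1) = e then 1 else 0)
      = if e = 0 then 3 else 1 := by
    revert e; decide
  set ψ := castHom heven (ZMod 2)
  have hψ : Function.Surjective (ψ.toAddMonoidHom.prodMap ψ.toAddMonoidHom) :=
    Prod.map_surjective.mpr ⟨castHom_surjective heven, castHom_surjective heven⟩
  have hcount := AddMonoidHom.card_smul_sum_comp_of_surjective hψ
    fun p : ZMod 2 × ZMod 2 => if p.1 * (p.2 - 1) = e then 1 else 0
  rw [htable, Fintype.card_prod, Fintype.card_prod, ZMod.card, ZMod.card, Fintype.sum_prod_type,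
    smul_eq_mul, smul_eq_mul, ← sq q] at hcount
  simp only [Nat.reduceMul, RingHom.toAddMonoidHom_eq_coe, AddMonoidHom.coe_prodMap,
    AddMonoidHom.coe_coe, Prod.map_apply] at hcount
  exact hcount

end ZMod

open ZMod in
theorem card_filter_P1P3_eq {q : ℕ} [NeZero q] (heven : 2 ∣ q) (c : ZMod q) :
    2 * q * #{t : ZMod q × ZMod q × ZMod q × ZMod q × ZMod q × ZMod q |
        t.1 * (t.2.1 - 3) - 2 * t.2.2.1 - 2 * t.2.2.2.1 - 4 * t.2.2.2.2.1
          - 2 * t.2.2.2.2.2 = c}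
      = q ^ 6 * if castHom heven (ZMod 2) c = 0 then 3 else 1 := by
  have hparity : ∀ a b d₁ d₂ d₃ e : ZMod 2,
      a * (b - 3) - 2 * d₁ - 2 * d₂ - 4 * d₃ - e = 0 ↔ a * (b - 1) = e := by
    decide
  have hw₄ (x y w₁ w₂ w₃ : ZMod q) :
      #{w₄ | x * (y - 3) - 2 * w₁ - 2 * w₂ - 4 * w₃ - 2 * w₄ = c}
        = 2 * if castHom heven (ZMod 2) x * (castHom heven (ZMod 2) y - 1)
            = castHom heven (ZMod 2) c then 1 else 0 := by
    have hsolve (w₄ : ZMod q) : x * (y - 3) - 2 * w₁ - 2 * w₂ - 4 * w₃ - 2 * w₄ = c ↔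
        2 * w₄ = x * (y - 3) - 2 * w₁ - 2 * w₂ - 4 * w₃ - c := by
      constructor <;> intro h <;> linear_combination -h
    simp only [hsolve, card_filter_two_mul_eq heven, map_sub, map_mul, map_ofNat, hparity,
      mul_ite, mul_one, mul_zero]
  have hsplit : #{t : ZMod q × ZMod q × ZMod q × ZMod q × ZMod q × ZMod q |
        t.1 * (t.2.1 - 3) - 2 * t.2.2.1 - 2 * t.2.2.2.1 - 4 * t.2.2.2.2.1 - 2 * t.2.2.2.2.2 = c}
      = ∑ x, ∑ y, ∑ w₁, ∑ w₂, ∑ w₃,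
          #{w₄ | x * (y - 3) - 2 * w₁ - 2 * w₂ - 4 * w₃ - 2 * w₄ = c} := by
    simp only [card_filter, Fintype.sum_prod_type]
  simp only [hsplit, hw₄, sum_const, card_univ, ZMod.card, smul_eq_mul, ← mul_sum]
  calc _ = q ^ 4 * (4 * ∑ x : ZMod q, ∑ y : ZMod q,
        if castHom heven (ZMod 2) x * (castHom heven (ZMod 2) y - 1)
          = castHom heven (ZMod 2) c then 1 else 0) := by ring
    _ = _ := by rw [four_mul_sum_sum_ite_castHom_mul_sub_one]; ring

theorem P1P3_distribution_general (q : ℕ) [NeZero q] (heven : 2 ∣ q)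
    (i : ℕ) :
    2 * q * (Finset.univ.filter
        (fun t : ZMod q × ZMod q × ZMod q × ZMod q × ZMod q × ZMod q =>
          t.1 * (t.2.1 - 3) - 2 * t.2.2.1 - 2 * t.2.2.2.1 - 4 * t.2.2.2.2.1
            - 2 * t.2.2.2.2.2 = ((2 * i : ℕ) : ZMod q))).card
        = 3 * q ^ 6 ∧
    2 * q * (Finset.univ.filter
        (fun t : ZMod q × ZMod q × ZMod q × ZMod q × ZMod q × ZMod q =>
          t.1 * (t.2.1 - 3) - 2 * t.2.2.1 - 2 * t.2.2.2.1 - 4 * t.2.2.2.2.1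
            - 2 * t.2.2.2.2.2 = ((2 * i + 1 : ℕ) : ZMod q))).card
        = q ^ 6 := by
  have h_even : ((2 * i : ℕ) : ZMod 2) = 0 :=
    (ZMod.natCast_eq_zero_iff _ 2).mpr (dvd_mul_right 2 i)
  have h_odd : ((2 * i + 1 : ℕ) : ZMod 2) ≠ 0 := by
    rw [Ne, ZMod.natCast_eq_zero_iff]
    omega
  constructor
  · rw [card_filter_P1P3_eq heven, map_natCast, if_pos h_even, mul_comm]
  · rw [card_filter_P1P3_eq heven, map_natCast, if_neg h_odd, mul_one]

/-- For even `q ≥ 2` and `X, Y, W₁, W₂, W₃, W₄` mutually independent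
uniform on `ℤ/q`, the variable `Z = X(Y-3) - 2W₁ - 2W₂ - 4W₃ - 2W₄` satisfies
`P(Z ≡ 2i) = 3/(2q)` and `P(Z ≡ 2i+1) = 1/(2q)` for each `0 ≤ i < q/2`
(stated by counting the `q^6` equally likely outcomes). -/
theorem P1P3_distribution (q : ℕ) [NeZero q] (hq : 2 ≤ q) (heven : 2 ∣ q)
    (i : ℕ) (hi : i < q / 2) :
    2 * q * (Finset.univ.filter
        (fun t : ZMod q × ZMod q × ZMod q × ZMod q × ZMod q × ZMod q =>
          t.1 * (t.2.1 - 3) - 2 * t.2.2.1 - 2 * t.2.2.2.1 - 4 * t.2.2.2.2.1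
            - 2 * t.2.2.2.2.2 = ((2 * i : ℕ) : ZMod q))).card
        = 3 * q ^ 6 ∧
    2 * q * (Finset.univ.filter
        (fun t : ZMod q × ZMod q × ZMod q × ZMod q × ZMod q × ZMod q =>
          t.1 * (t.2.1 - 3) - 2 * t.2.2.1 - 2 * t.2.2.2.1 - 4 * t.2.2.2.2.1
            - 2 * t.2.2.2.2.2 = ((2 * i + 1 : ℕ) : ZMod q))).card
        = q ^ 6 :=
  P1P3_distribution_general q heven i
end
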